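/- arXiv:1911.00513 — 3 statements merged into one kernel-verified Lean document; each statement's English description precedes it below -/
import Mathlib

section
/- For every n ≥ 1, the range of the linear map A_{n,1/2} is exactly the subspace {ν ∈ ℝ^{{0,1}^n} : ν(ρ) = ν(−ρ) for all ρ ∈ {0,1}^n}, where −ρ denotes the binary string obtained from ρ by switching all zeros and ones. -/
open Finset

/-- The divide-and-color matrix `A_{n,p}`: entry at configuration `ρ` and partition `σ` is
`p^{c(σ,ρ)}(1-p)^{‖σ‖-c(σ,ρ)}` if `ρ` is constant on every block of `σ`, and `0` otherwise. -/
noncomputable def colorMatrix (n : ℕ) (p : ℝ) :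
    Matrix (Fin n → Bool) (Finpartition (univ : Finset (Fin n))) ℝ :=
  fun ρ σ =>
    if ∀ B ∈ σ.parts, ∀ i ∈ B, ∀ j ∈ B, ρ i = ρ j then
      p ^ (σ.parts.filter (fun B => ∀ i ∈ B, ρ i = true)).card *
        (1 - p) ^ (σ.parts.card - (σ.parts.filter (fun B => ∀ i ∈ B, ρ i = true)).card)
    else 0

/-- The induced linear map `A_{n,p} : ℝ^{B_n} → ℝ^{{0,1}^n}`. -/
noncomputable def colorMap (n : ℕ) (p : ℝ) :
    ((Finpartition (univ : Finset (Fin n))) → ℝ) →ₗ[ℝ] ((Fin n → Bool) → ℝ) :=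
  (colorMatrix n p).mulVecLin

/-!
Flipping every colour exchanges the roles of `p` and `1 - p`, so the range of `A_{n,1/2}` consists
of flip-symmetric vectors. Conversely, at `p = 1/2` the column of `σ` is `2^{-‖σ‖}` times the
indicator of the colourings constant on the blocks of `σ`. For the partition of `[n]` into the
colour classes of `ρ` these are the colourings factoring through `ρ`, namely `ρ`, `-ρ` and the two
constants; so the indicators of the pairs `{ρ, -ρ}` lie in the range (for non-constant `ρ`, subtract
the column of the one-block partition), and they span the symmetric vectors.
-/

open Function

instance {ι β : Type*} (f : ι → β) [DecidableEq β] : DecidableRel (Setoid.ker f) :=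
  fun a b => decEq (f a) (f b)

section Partitions

variable {ι β : Type*} [Fintype ι] [DecidableEq ι]

def constOnParts [Fintype β] [DecidableEq β] (σ : Finpartition (univ : Finset ι)) :
    Finset (ι → β) :=
  {ρ | ∀ B ∈ σ.parts, ∀ i ∈ B, ∀ j ∈ B, ρ i = ρ j}

def kerPartition [DecidableEq β] (f : ι → β) : Finpartition (univ : Finset ι) :=
  Finpartition.ofSetoid (Setoid.ker f)

theorem mem_constOnParts_kerPartition {γ : Type*} [Fintype γ] [DecidableEq γ] [DecidableEq β]
    (f : ι → β) (g : ι → γ) : g ∈ constOnParts (kerPartition f) ↔ g.FactorsThrough f := by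
  simp only [constOnParts, mem_filter, mem_univ, true_and]
  constructor
  · intro h i j hij
    exact h _ ((kerPartition f).part_mem.mpr (mem_univ i)) i
      ((kerPartition f).mem_part (mem_univ i)) j (Finpartition.mem_part_ofSetoid_iff_rel.mpr hij)
  · intro h B hB i hi j hj
    rw [← (kerPartition f).part_eq_of_mem hB hi] at hj
    exact h (Finpartition.mem_part_ofSetoid_iff_rel.mp hj)

end Partitions

theorem factorsThrough_bool_iff {ι : Type*} {ρ ρ' : ι → Bool} :
    ρ'.FactorsThrough ρ ↔
      ρ' = ρ ∨ ρ' = (fun i => !ρ i) ∨ ρ' = (fun _ => true) ∨ ρ' = (fun _ => false) := by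
  constructor
  · intro h
    set e := extend ρ ρ' id
    have he : ∀ i, ρ' i = e (ρ i) := fun i => (h.extend_apply id i).symm
    cases ht : e true <;> cases hf : e false
    · refine .inr <| .inr <| .inr <| funext fun i => ?_
      rw [he]; cases ρ i <;> assumption
    · refine .inr <| .inl <| funext fun i => ?_
      rw [he]; cases ρ i <;> assumption
    · refine .inl <| funext fun i => ?_
      rw [he]; cases ρ i <;> assumption
    · refine .inr <| .inr <| .inl <| funext fun i => ?_
      rw [he]; cases ρ i <;> assumption
  · rintro (rfl | rfl | rfl | rfl) <;> intro a b h <;> simp [h]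

section BoolFinset

variable {ι : Type*} [Fintype ι]

theorem constOnParts_kerPartition_bool [DecidableEq ι] (ρ : ι → Bool) :
    constOnParts (kerPartition ρ) = {ρ, fun i => !ρ i} ∪ {fun _ => true, fun _ => false} := by
  ext ρ'
  simp only [mem_constOnParts_kerPartition, factorsThrough_bool_iff, mem_union, mem_insert,
    mem_singleton, or_assoc]

theorem pair_not_eq_of_mem_const {ρ : ι → Bool}
    (hρ : ρ ∈ ({fun _ => true, fun _ => false} : Finset (ι → Bool))) :
    ({ρ, fun i => !ρ i} : Finset (ι → Bool)) = {fun _ => true, fun _ => false} := by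
  rcases mem_insert.mp hρ with rfl | hρ
  · rfl
  · rw [mem_singleton.mp hρ, pair_comm]
    rfl

theorem disjoint_pair_not_of_not_mem_const {ρ : ι → Bool}
    (hρ : ρ ∉ ({fun _ => true, fun _ => false} : Finset (ι → Bool))) :
    Disjoint ({ρ, fun i => !ρ i} : Finset (ι → Bool)) {fun _ => true, fun _ => false} := by
  simp only [mem_insert, mem_singleton, not_or] at hρ
  simp only [disjoint_insert_left, mem_insert, mem_singleton, not_or, disjoint_singleton_left]
  refine ⟨hρ, fun h => hρ.2 ?_, fun h => hρ.1 ?_⟩ <;>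
    funext i <;> simpa using congrFun h i

end BoolFinset

theorem sum_smul_single_add_single_eq_two_smul {α R : Type*} [Fintype α] [DecidableEq α]
    [Semiring R] {τ : α → α} (hτ : Involutive τ) {ν : α → R} (hν : ∀ a, ν (τ a) = ν a) :
    ∑ a, ν a • (Pi.single a 1 + Pi.single (τ a) 1) = (2 : R) • ν := by
  simp_rw [smul_add, ← Pi.single_smul, smul_eq_mul, mul_one, sum_add_distrib]
  have hsum : ∑ a, Pi.single (τ a) (ν a) = ν :=
    calc ∑ a, Pi.single (τ a) (ν a) = ∑ a, (Pi.single (τ a) (ν (τ a)) : α → R) := by simp only [hν]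
      _ = ν := (Equiv.sum_comp hτ.toPerm fun a => Pi.single a (ν a)).trans (univ_sum_single ν)
  rw [univ_sum_single, hsum, two_smul]

theorem colorMatrix_apply_not (n : ℕ) (p : ℝ) (ρ : Fin n → Bool)
    (σ : Finpartition (univ : Finset (Fin n))) :
    colorMatrix n p (fun i => !ρ i) σ = colorMatrix n (1 - p) ρ σ := by
  simp only [colorMatrix, Bool.not_inj_iff]
  split_ifs with h
  · have hF : σ.parts.filter (fun B => ∀ i ∈ B, (!ρ i) = true) =
        σ.parts.filter (fun B => ¬ ∀ i ∈ B, ρ i = true) := by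
      refine filter_congr fun B hB => ⟨fun hB' hB'' => ?_, fun hB' i hi => ?_⟩
      · obtain ⟨i, hi⟩ := σ.nonempty_of_mem_parts hB
        simpa [hB'' i hi] using hB' i hi
      · push Not at hB'
        obtain ⟨j, hj, hρj⟩ := hB'
        simpa [h B hB i hi j hj] using hρj
    have hcard := card_filter_add_card_filter_not (s := σ.parts)
      (fun B => ∀ i ∈ B, ρ i = true)
    rw [hF, sub_sub_cancel, mul_comm, ← hcard, Nat.add_sub_cancel, Nat.add_sub_cancel_left]
  · rfl

theorem colorMap_apply_not (n : ℕ) (p : ℝ) (x : Finpartition (univ : Finset (Fin n)) → ℝ)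
    (ρ : Fin n → Bool) : colorMap n p x (fun i => !ρ i) = colorMap n (1 - p) x ρ := by
  simp only [colorMap, Matrix.mulVecLin_apply, Matrix.mulVec, dotProduct, colorMatrix_apply_not]

theorem colorMatrix_half {n : ℕ} (ρ : Fin n → Bool) (σ : Finpartition (univ : Finset (Fin n))) :
    colorMatrix n (1/2) ρ σ = if ρ ∈ constOnParts σ then (1/2 : ℝ) ^ #σ.parts else 0 := by
  simp only [colorMatrix, constOnParts, mem_filter, mem_univ, true_and]
  split
  · rw [show (1 : ℝ) - 1/2 = 1/2 by norm_num, ← pow_add,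
      Nat.add_sub_cancel' (card_filter_le _ _)]
  · rfl

theorem colorMap_half_single {n : ℕ} (σ : Finpartition (univ : Finset (Fin n))) :
    colorMap n (1/2) (Pi.single σ (2 ^ #σ.parts)) = ∑ ρ ∈ constOnParts σ, Pi.single ρ 1 := by
  ext ρ
  simp only [colorMap, Matrix.mulVecLin_apply, Matrix.mulVec_single, Pi.smul_apply,
    Matrix.col_apply, colorMatrix_half, Finset.sum_apply, sum_pi_single]
  split <;> simp

theorem sum_single_constOnParts_mem_range {n : ℕ} (σ : Finpartition (univ : Finset (Fin n))) :
    ∑ ρ ∈ constOnParts σ, Pi.single ρ (1 : ℝ) ∈ LinearMap.range (colorMap n (1/2)) :=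
  colorMap_half_single σ ▸ LinearMap.mem_range_self _ _

theorem sum_single_pair_not_mem_range {n : ℕ} (ρ : Fin n → Bool) :
    ∑ ρ' ∈ {ρ, fun i => !ρ i}, Pi.single ρ' (1 : ℝ) ∈ LinearMap.range (colorMap n (1/2)) := by
  have hconst := sum_single_constOnParts_mem_range (kerPartition fun (_ : Fin n) => true)
  rw [constOnParts_kerPartition_bool, pair_not_eq_of_mem_const (by simp), union_self] at hconst
  by_cases hρ : ρ ∈ ({fun _ => true, fun _ => false} : Finset (Fin n → Bool))
  · rwa [pair_not_eq_of_mem_const hρ]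
  · have hker := sum_single_constOnParts_mem_range (kerPartition ρ)
    rw [constOnParts_kerPartition_bool, sum_union (disjoint_pair_not_of_not_mem_const hρ)] at hker
    exact (add_mem_cancel_right hconst).mp hker

/-- for `n ≥ 1`, the range of `A_{n,1/2}` is exactly the subspace of
`{0,1}`-symmetric vectors `ν`, i.e. those with `ν(ρ) = ν(-ρ)` for all `ρ`. -/
theorem range_colorMap_half (n : ℕ) (hn : 1 ≤ n) :
    (LinearMap.range (colorMap n (1/2)) : Set ((Fin n → Bool) → ℝ)) =
      {ν : (Fin n → Bool) → ℝ | ∀ ρ : Fin n → Bool, ν ρ = ν (fun i => !(ρ i))} := by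
  ext ν
  constructor
  · rintro ⟨x, rfl⟩ ρ
    rw [colorMap_apply_not]
    norm_num
  · intro hν
    have hflip : ∀ ρ : Fin n → Bool, ρ ≠ fun i => !ρ i := fun ρ h => by
      simpa using congrFun h ⟨0, hn⟩
    have h2ν : (2 : ℝ) • ν ∈ LinearMap.range (colorMap n (1/2)) := by
      rw [← sum_smul_single_add_single_eq_two_smul (τ := fun ρ i => !ρ i)
        (fun ρ => funext fun i => Bool.not_not (ρ i)) fun ρ => (hν ρ).symm]
      refine Submodule.sum_mem _ fun ρ _ => Submodule.smul_mem _ _ ?_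
      rw [← sum_pair (f := fun ρ' => Pi.single ρ' (1 : ℝ)) (hflip ρ)]
      exact sum_single_pair_not_mem_range ρ
    simpa using Submodule.smul_mem _ (1/2 : ℝ) h2ν
end

section
/- Let n ≥ 1 and let ν be a probability vector on {0,1}^n satisfying ν(ρ) = ν(−ρ) for all ρ. Define q ∈ ℝ^{B_n} by: q_σ = 2(ν(0^S 1^{S^c}) + ν(1^S 0^{S^c})) if σ = {S, S^c} is a two-block partition with S ∉ {∅, [n]}; q_σ = 1 − Σ_{σ' ∈ B_n with two blocks} q_{σ'} if σ is the one-block partition {[n]}; and q_σ = 0 otherwise. Then A_{n,1/2} q = ν, i.e., q is a formal solution for ν at p = 1/2. -/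
/-!
At `p = 1/2` the entry of `A` at `(ρ, σ)` is `2^{-‖σ‖}` when `ρ` is constant on the blocks of
`σ` and `0` otherwise. A non-constant `ρ` is constant on the blocks of exactly one partition
with at most two blocks, namely `{supp ρ, (supp ρ)ᶜ}`, so
`(A q)(ρ) = q_σ / 4 = (ν(ρ) + ν(-ρ)) / 2 = ν(ρ)`.
A constant `ρ` is constant on the blocks of every partition, so
`(A q)(ρ) = q_{[n]} / 2 + T / 4`, where `T` is the total of `q` over the two-block partitions.
Counting every non-constant configuration through its unique two-block partition gives
`T = 2 (1 - ν(ρ) - ν(-ρ))`, hence `(A q)(ρ) = 1/2 - T/4 = ν(ρ)`.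
-/

open Finset

section BoolConfigurations

variable {α : Type*} [Fintype α] [DecidableEq α]

theorem not_const_decide_mem {S : Finset α} (hS : S.Nonempty) (hSc : Sᶜ.Nonempty) :
    ¬ ∀ i j, decide (i ∈ S) = decide (j ∈ S) := by
  obtain ⟨⟨a, ha⟩, ⟨b, hb⟩⟩ := And.intro hS hSc
  intro h
  simpa [ha, mem_compl.1 hb] using h a b

theorem filter_const_eq_pair [Nonempty α] {ρ : α → Bool} (hρ : ∀ i j, ρ i = ρ j) :
    univ.filter (fun ρ' : α → Bool => ∀ i j, ρ' i = ρ' j) = {ρ, fun i => !ρ i} := by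
  obtain ⟨a⟩ := ‹Nonempty α›
  ext ρ'
  simp only [mem_filter, mem_univ, true_and, mem_insert, mem_singleton, funext_iff]
  constructor
  · intro hρ'
    cases hρa : ρ a <;> cases hρ'a : ρ' a <;> [left; right; right; left] <;> intro i <;>
      simp [hρ' i a, hρ i a, hρa, hρ'a]
  · rintro (h | h) i j <;> simp [h, hρ i j]

theorem sum_not_const_eq [Nonempty α] {ν : (α → Bool) → ℝ} (hsum : ∑ ρ, ν ρ = 1)
    (hsym : ∀ ρ : α → Bool, ν ρ = ν (fun i => !(ρ i))) {ρ : α → Bool}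
    (hρ : ∀ i j, ρ i = ρ j) :
    ∑ ρ' with ¬ ∀ i j, ρ' i = ρ' j, ν ρ' = 1 - 2 * ν ρ := by
  obtain ⟨a⟩ := ‹Nonempty α›
  have hne : ρ ≠ fun i => !ρ i := fun h => by simpa using congrFun h a
  have := sum_filter_add_sum_filter_not univ (fun ρ' : α → Bool => ∀ i j, ρ' i = ρ' j) ν
  rw [filter_const_eq_pair hρ, sum_pair hne, ← hsym, hsum] at this
  linarith

end BoolConfigurations

namespace Finpartition

variable {α : Type*} [DecidableEq α]

def ConstOnParts {β : Type*} {s : Finset α} (σ : Finpartition s) (ρ : α → β) : Prop :=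
  ∀ B ∈ σ.parts, ∀ i ∈ B, ∀ j ∈ B, ρ i = ρ j

instance {β : Type*} [DecidableEq β] {s : Finset α} (σ : Finpartition s) (ρ : α → β) :
    Decidable (σ.ConstOnParts ρ) := by
  unfold ConstOnParts; infer_instance

theorem parts_eq_singleton_of_card_parts_eq_one {s : Finset α} {σ : Finpartition s}
    (h : #σ.parts = 1) : σ.parts = {s} := by
  obtain ⟨A, hA⟩ := card_eq_one.1 h
  have hsup := σ.sup_parts
  rw [hA, sup_singleton] at hsup
  rw [hA, ← hsup, id]

theorem filter_card_parts_eq_one {s : Finset α} (hs : s ≠ ⊥) :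
    univ.filter (fun σ : Finpartition s => #σ.parts = 1) = {indiscrete hs} := by
  ext σ
  simp only [mem_filter, mem_univ, true_and, mem_singleton]
  refine ⟨fun h => Finpartition.ext (parts_eq_singleton_of_card_parts_eq_one h), ?_⟩
  rintro rfl
  exact card_singleton s

theorem constOnParts_indiscrete_iff {β : Type*} {s : Finset α} (hs : s ≠ ⊥) {ρ : α → β} :
    (indiscrete hs).ConstOnParts ρ ↔ ∀ i ∈ s, ∀ j ∈ s, ρ i = ρ j := by
  simp only [ConstOnParts, indiscrete_parts, mem_singleton, forall_eq]

variable [Fintype α]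

theorem exists_parts_eq_pair_compl {σ : Finpartition (univ : Finset α)} (h : #σ.parts = 2) :
    ∃ S, σ.parts = {S, Sᶜ} := by
  obtain ⟨A, B, hAB, hparts⟩ := card_eq_two.1 h
  have hsup : A ⊔ B = ⊤ := by simpa [hparts] using σ.sup_parts
  have hdisj : Disjoint A B := by simpa [hparts, supIndep_pair hAB] using σ.supIndep
  exact ⟨A, by rw [hparts, (IsCompl.of_eq hdisj.eq_bot hsup).compl_eq]⟩

theorem nonempty_of_parts_eq_pair_compl {σ : Finpartition (univ : Finset α)} {S : Finset α}
    (hσ : σ.parts = {S, Sᶜ}) : S.Nonempty ∧ Sᶜ.Nonempty := by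
  constructor <;> rw [nonempty_iff_ne_empty] <;> apply σ.ne_bot <;> simp [hσ]

theorem ne_empty_and_ne_univ_of_parts_eq_pair_compl {σ : Finpartition (univ : Finset α)}
    {S : Finset α} (hσ : σ.parts = {S, Sᶜ}) : S ≠ ∅ ∧ S ≠ univ := by
  obtain ⟨hS, hSc⟩ := nonempty_of_parts_eq_pair_compl hσ
  exact ⟨hS.ne_empty, fun h => by simp [h] at hSc⟩

theorem constOnParts_iff_of_parts_eq_pair_compl {σ : Finpartition (univ : Finset α)}
    {S : Finset α} (hσ : σ.parts = {S, Sᶜ}) {ρ : α → Bool} (hρ : ¬ ∀ i j, ρ i = ρ j) :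
    σ.ConstOnParts ρ ↔
      ρ = (fun i => decide (i ∈ S)) ∨ ρ = (fun i => decide (i ∈ Sᶜ)) := by
  constructor
  · intro h
    obtain ⟨⟨a, ha⟩, ⟨b, hb⟩⟩ := nonempty_of_parts_eq_pair_compl hσ
    have hS : ∀ i ∈ S, ρ i = ρ a := fun i hi => h S (by simp [hσ]) i hi a ha
    have hSc : ∀ i ∈ Sᶜ, ρ i = ρ b := fun i hi => h Sᶜ (by simp [hσ]) i hi b hb
    have hρ_eq : ρ = fun i => if i ∈ S then ρ a else ρ b := by
      funext i
      split_ifs with hi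
      exacts [hS i hi, hSc i (mem_compl.2 hi)]
    generalize ρ a = x, ρ b = y at hρ_eq
    subst hρ_eq
    cases x <;> cases y <;> simp_all [funext_iff]
  · rintro (rfl | rfl) B hB i hi j hj <;> rw [hσ] at hB <;> simp at hB <;>
      rcases hB with rfl | rfl <;> simp_all

theorem filter_not_const_constOnParts {σ : Finpartition (univ : Finset α)} {S : Finset α}
    (hσ : σ.parts = {S, Sᶜ}) :
    univ.filter (fun ρ : α → Bool => (¬ ∀ i j, ρ i = ρ j) ∧ σ.ConstOnParts ρ) =
      {fun i => decide (i ∈ S), fun i => decide (i ∈ Sᶜ)} := by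
  obtain ⟨hS, hSc⟩ := nonempty_of_parts_eq_pair_compl hσ
  ext ρ
  simp only [mem_filter, mem_univ, true_and, mem_insert, mem_singleton]
  constructor
  · rintro ⟨hρ, h⟩
    exact (constOnParts_iff_of_parts_eq_pair_compl hσ hρ).1 h
  · intro h
    have hρ : ¬ ∀ i j, ρ i = ρ j := by
      rcases h with rfl | rfl
      · exact not_const_decide_mem hS hSc
      · exact not_const_decide_mem hSc (by rwa [compl_compl])
    exact ⟨hρ, (constOnParts_iff_of_parts_eq_pair_compl hσ hρ).2 h⟩

theorem filter_card_parts_eq_two_constOnParts {σ₀ : Finpartition (univ : Finset α)}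
    {S : Finset α} (hσ₀ : σ₀.parts = {S, Sᶜ}) :
    univ.filter (fun σ : Finpartition (univ : Finset α) =>
      #σ.parts = 2 ∧ σ.ConstOnParts (fun i => decide (i ∈ S))) = {σ₀} := by
  obtain ⟨hS, hSc⟩ := nonempty_of_parts_eq_pair_compl hσ₀
  have hρ := not_const_decide_mem hS hSc
  ext σ
  simp only [mem_filter, mem_univ, true_and, mem_singleton]
  constructor
  · rintro ⟨h2, h⟩
    obtain ⟨T, hT⟩ := exists_parts_eq_pair_compl h2
    refine Finpartition.ext ?_
    rcases (constOnParts_iff_of_parts_eq_pair_compl hT hρ).1 h with h | h <;>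
      obtain rfl := Finset.ext fun i => decide_eq_decide.1 (congrFun h i)
    · rw [hT, hσ₀]
    · rw [hT, hσ₀, compl_compl, pair_comm]
  · rintro rfl
    have : Nonempty α := hS.to_subtype.map Subtype.val
    exact ⟨by rw [hσ₀, card_pair ne_compl_self],
      (constOnParts_iff_of_parts_eq_pair_compl hσ₀ hρ).2 (.inl rfl)⟩

theorem exists_parts_eq_pair_compl_of_not_const {ρ : α → Bool} (hρ : ¬ ∀ i j, ρ i = ρ j) :
    ∃ (S : Finset α) (σ : Finpartition (univ : Finset α)),
      σ.parts = {S, Sᶜ} ∧ ρ = fun i => decide (i ∈ S) := by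
  push Not at hρ
  obtain ⟨i, j, hij⟩ := hρ
  have hS : (univ.filter fun k => ρ k).Nonempty ∧ (univ.filter fun k => ρ k)ᶜ.Nonempty := by
    cases hi : ρ i
    · exact ⟨⟨j, by simp_all⟩, ⟨i, by simp_all⟩⟩
    · exact ⟨⟨i, by simp_all⟩, ⟨j, by simp_all⟩⟩
  refine ⟨_, (indiscrete hS.2.ne_empty).extend hS.1.ne_empty disjoint_compl_left
    compl_sup_eq_top, rfl, by simp⟩

end Finpartition

open Finpartition in
theorem sum_card_parts_eq_two {α : Type*} [Fintype α] [DecidableEq α]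
    {ν : (α → Bool) → ℝ} {q : Finpartition (univ : Finset α) → ℝ}
    (hq2 : ∀ σ : Finpartition (univ : Finset α), ∀ S : Finset α,
      S ≠ ∅ → S ≠ univ → σ.parts = {S, Sᶜ} →
      q σ = 2 * (ν (fun i => decide (i ∉ S)) + ν (fun i => decide (i ∈ S)))) :
    ∑ σ : Finpartition (univ : Finset α) with #σ.parts = 2, q σ =
      2 * ∑ ρ : α → Bool with ¬ ∀ i j, ρ i = ρ j, ν ρ := by
  calc ∑ σ : Finpartition (univ : Finset α) with #σ.parts = 2, q σ
      = ∑ σ : Finpartition (univ : Finset α) with #σ.parts = 2,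
          ∑ ρ with (¬ ∀ i j, ρ i = ρ j) ∧ σ.ConstOnParts ρ, 2 * ν ρ := by
        refine sum_congr rfl fun σ hσ => ?_
        obtain ⟨S, hS⟩ := exists_parts_eq_pair_compl (mem_filter.1 hσ).2
        obtain ⟨hS₁, hS₂⟩ := ne_empty_and_ne_univ_of_parts_eq_pair_compl hS
        obtain ⟨a, ha⟩ := nonempty_iff_ne_empty.2 hS₁
        have hne : (fun i => decide (i ∈ S)) ≠ fun i => decide (i ∈ Sᶜ) := fun h => by
          simpa [ha] using congrFun h a
        rw [filter_not_const_constOnParts hS, sum_pair hne, hq2 σ S hS₁ hS₂ hS]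
        simp only [mem_compl]
        ring
    _ = ∑ ρ : α → Bool with ¬ ∀ i j, ρ i = ρ j,
          ∑ σ : Finpartition (univ : Finset α) with #σ.parts = 2 ∧ σ.ConstOnParts ρ,
            2 * ν ρ :=
        sum_comm' fun σ ρ => by simp only [mem_filter, mem_univ, true_and]; tauto
    _ = ∑ ρ : α → Bool with ¬ ∀ i j, ρ i = ρ j, 2 * ν ρ := by
        refine sum_congr rfl fun ρ hρ => ?_
        obtain ⟨S, σ₀, hσ₀, rfl⟩ :=
          exists_parts_eq_pair_compl_of_not_const (mem_filter.1 hρ).2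
        rw [filter_card_parts_eq_two_constOnParts hσ₀, sum_singleton]
    _ = 2 * ∑ ρ : α → Bool with ¬ ∀ i j, ρ i = ρ j, ν ρ := (mul_sum ..).symm

theorem colorMatrix_half_apply (n : ℕ) (ρ : Fin n → Bool)
    (σ : Finpartition (univ : Finset (Fin n))) :
    colorMatrix n (1/2) ρ σ = if σ.ConstOnParts ρ then (1/2 : ℝ) ^ #σ.parts else 0 := by
  have hc : σ.ConstOnParts ρ ↔ ∀ B ∈ σ.parts, ∀ i ∈ B, ∀ j ∈ B, ρ i = ρ j :=
    Iff.rfl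
  simp only [colorMatrix]
  by_cases h : σ.ConstOnParts ρ
  · rw [if_pos h, if_pos (hc.1 h), show (1 : ℝ) - 1/2 = 1/2 by norm_num, ← pow_add,
      Nat.add_sub_cancel' (card_filter_le _ _)]
  · rw [if_neg h, if_neg (mt hc.2 h)]

open Finpartition in
theorem colorMap_half_apply {n : ℕ} (hn : (univ : Finset (Fin n)) ≠ ⊥)
    {q : Finpartition (univ : Finset (Fin n)) → ℝ}
    (hq0 : ∀ σ : Finpartition (univ : Finset (Fin n)),
      #σ.parts ≠ 1 → #σ.parts ≠ 2 → q σ = 0) (ρ : Fin n → Bool) :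
    colorMap n (1/2) q ρ =
      (if ∀ i j, ρ i = ρ j then q (indiscrete hn) / 2 else 0) +
        (∑ σ : Finpartition (univ : Finset (Fin n)) with #σ.parts = 2 ∧ σ.ConstOnParts ρ,
          q σ) / 4 := by
  let f σ := (if σ.ConstOnParts ρ then (1/2 : ℝ) ^ #σ.parts else 0) * q σ
  calc colorMap n (1/2) q ρ = ∑ σ, colorMatrix n (1/2) ρ σ * q σ := rfl
    _ = ∑ σ, f σ := by simp only [colorMatrix_half_apply, f]
    _ = ∑ σ with #σ.parts = 1, f σ + ∑ σ with #σ.parts = 2, f σ := by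
        rw [← sum_union (disjoint_filter.2 fun σ _ h1 h2 => by omega)]
        refine (sum_subset (subset_univ _) fun σ _ hσ => ?_).symm
        simp only [mem_union, mem_filter, mem_univ, true_and, not_or] at hσ
        simp [f, hq0 σ hσ.1 hσ.2]
    _ = _ := by
        rw [filter_card_parts_eq_one hn, sum_singleton]
        congr 1
        · simp only [f, constOnParts_indiscrete_iff, indiscrete_parts, card_singleton, mem_univ,
            true_implies]
          split_ifs <;> ring
        · rw [← filter_filter, sum_div,
            sum_filter (s := univ.filter fun σ : Finpartition univ => #σ.parts = 2)]
          refine sum_congr rfl fun σ hσ => ?_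
          simp only [f, (mem_filter.1 hσ).2]
          split_ifs <;> ring

theorem formal_solution_half_general (n : ℕ) (hn : 1 ≤ n) (ν : (Fin n → Bool) → ℝ)
    (hsum : ∑ ρ, ν ρ = 1)
    (hsym : ∀ ρ : Fin n → Bool, ν ρ = ν (fun i => !(ρ i)))
    (q : Finpartition (univ : Finset (Fin n)) → ℝ)
    (hq2 : ∀ σ : Finpartition (univ : Finset (Fin n)), ∀ S : Finset (Fin n),
      S ≠ ∅ → S ≠ univ → σ.parts = {S, Sᶜ} →
      q σ = 2 * (ν (fun i => decide (i ∉ S)) + ν (fun i => decide (i ∈ S))))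
    (hq1 : ∀ σ : Finpartition (univ : Finset (Fin n)), σ.parts = {(univ : Finset (Fin n))} →
      q σ = 1 - ∑ σ' ∈ univ.filter
        (fun σ' : Finpartition (univ : Finset (Fin n)) => σ'.parts.card = 2), q σ')
    (hq0 : ∀ σ : Finpartition (univ : Finset (Fin n)),
      σ.parts.card ≠ 1 → σ.parts.card ≠ 2 → q σ = 0) :
    colorMap n (1/2) q = ν := by
  have : Nonempty (Fin n) := ⟨⟨0, hn⟩⟩
  have huniv : (univ : Finset (Fin n)) ≠ ⊥ := univ_nonempty.ne_empty
  funext ρ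
  rw [colorMap_half_apply huniv hq0]
  by_cases hρ : ∀ i j, ρ i = ρ j
  · have hall (σ : Finpartition (univ : Finset (Fin n))) : σ.ConstOnParts ρ :=
      fun _ _ i _ j _ => hρ i j
    simp only [if_pos hρ, hall, and_true]
    rw [hq1 _ (Finpartition.indiscrete_parts huniv), sum_card_parts_eq_two hq2,
      sum_not_const_eq hsum hsym hρ]
    ring
  · obtain ⟨S, σ₀, hσ₀, rfl⟩ := Finpartition.exists_parts_eq_pair_compl_of_not_const hρ
    obtain ⟨hS₁, hS₂⟩ := Finpartition.ne_empty_and_ne_univ_of_parts_eq_pair_compl hσ₀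
    rw [if_neg hρ, Finpartition.filter_card_parts_eq_two_constOnParts hσ₀, sum_singleton,
      hq2 σ₀ S hS₁ hS₂ hσ₀, hsym fun i => decide (i ∈ S)]
    simp only [decide_not]
    ring

/-- for a `{0,1}`-symmetric probability vector `ν` on `{0,1}^n`, the explicit
vector `q` supported on partitions with at most two blocks is a formal solution at `p = 1/2`. -/
theorem formal_solution_half (n : ℕ) (hn : 1 ≤ n) (ν : (Fin n → Bool) → ℝ)
    (hnonneg : ∀ ρ, 0 ≤ ν ρ) (hsum : ∑ ρ, ν ρ = 1)
    (hsym : ∀ ρ : Fin n → Bool, ν ρ = ν (fun i => !(ρ i)))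
    (q : Finpartition (univ : Finset (Fin n)) → ℝ)
    (hq2 : ∀ σ : Finpartition (univ : Finset (Fin n)), ∀ S : Finset (Fin n),
      S ≠ ∅ → S ≠ univ → σ.parts = {S, Sᶜ} →
      q σ = 2 * (ν (fun i => decide (i ∉ S)) + ν (fun i => decide (i ∈ S))))
    (hq1 : ∀ σ : Finpartition (univ : Finset (Fin n)), σ.parts = {(univ : Finset (Fin n))} →
      q σ = 1 - ∑ σ' ∈ univ.filter
        (fun σ' : Finpartition (univ : Finset (Fin n)) => σ'.parts.card = 2), q σ')
    (hq0 : ∀ σ : Finpartition (univ : Finset (Fin n)),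
      σ.parts.card ≠ 1 → σ.parts.card ≠ 2 → q σ = 0) :
    colorMap n (1/2) q = ν :=
  formal_solution_half_general n hn ν hsum hsym q hq2 hq1 hq0
end

section
/- Let n ≥ 1, let S ⊆ [n] have even cardinality, and let (ν_p)_{p ∈ (0,1)} be a family of functions ν_p : {0,1}^n → ℝ such that for each ρ ∈ {0,1}^n the map p ↦ ν_p(ρ) is differentiable at p = 1/2, and such that for all T ⊆ S and all p ∈ (0,1), ν_p(0^T 1^{S∖T}) = ν_{1−p}(0^{S∖T} 1^T). Then Σ_{T ⊆ S} (−2)^{|T|} ν'_{1/2}(1^T) = 0, where ν'_{1/2}(1^T) denotes the derivative of p ↦ ν_p(1^T) at p = 1/2. -/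
/-!
Expanding `ν(1^T)` over configurations, the weight of a configuration `ρ` in
`Σ_{T ⊆ S} (-2)^{|T|} ν(1^T)` is `Σ_{T ⊆ S ∩ ρ⁻¹(1)} (-2)^{|T|} = (-1)^{|S ∩ ρ⁻¹(1)|}`,
while in `F(ν) = Σ_{T ⊆ S} (-1)^{|T|} ν(0^T 1^{S∖T})` only `T = S ∩ ρ⁻¹(0)` contributes.
So the alternating sum is `(-1)^{|S|} F(ν)`, and the symmetry hypothesis, after reindexing
`T ↦ S ∖ T`, gives `F(ν_p) = (-1)^{|S|} F(ν_{1-p})`. For `|S|` even the function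
`p ↦ Σ_{T ⊆ S} (-2)^{|T|} ν_p(1^T)` is therefore symmetric about `1/2`, so its derivative there
vanishes.
-/

open Finset

/-- `ν(0^A 1^B)`: the total mass of configurations equal to `0` on `A` and `1` on `B`. -/
def zeroOneProb {n : ℕ} (ν : (Fin n → Bool) → ℝ) (A B : Finset (Fin n)) : ℝ :=
  ∑ ρ ∈ univ.filter
    (fun ρ : Fin n → Bool => (∀ i ∈ A, ρ i = false) ∧ ∀ i ∈ B, ρ i = true), ν ρ

open Filter Topology

theorem Finset.sum_powerset_neg_two_pow {ι : Type*} (s : Finset ι) :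
    ∑ t ∈ s.powerset, (-2 : ℝ) ^ #t = (-1) ^ #s := by
  have h := sum_pow_mul_eq_add_pow (-2 : ℝ) 1 s
  norm_num at h
  exact h

theorem neg_one_pow_add_mul_neg_one_pow (m k : ℕ) :
    (-1 : ℝ) ^ (m + k) * (-1) ^ k = (-1) ^ m := by
  rw [pow_add, mul_assoc, ← pow_add, ← two_mul, pow_mul, neg_one_sq, one_pow, mul_one]

theorem deriv_eq_zero_of_eventuallyEq_comp_const_sub {f : ℝ → ℝ} {a c : ℝ}
    (hf : f =ᶠ[𝓝 a] fun x => f (c - x)) (hc : c - a = a) : deriv f a = 0 := by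
  have h := hf.deriv_eq
  rw [deriv_comp_const_sub, hc] at h
  linarith

section zeroOneProb

variable {n : ℕ}

theorem differentiableAt_zeroOneProb {ν : ℝ → (Fin n → Bool) → ℝ} {p : ℝ}
    (hν : ∀ ρ, DifferentiableAt ℝ (fun q => ν q ρ) p) (A B : Finset (Fin n)) :
    DifferentiableAt ℝ (fun q => zeroOneProb (ν q) A B) p :=
  DifferentiableAt.fun_sum fun ρ _ => hν ρ

theorem sum_mul_zeroOneProb {ι : Type*} (s : Finset ι) (c : ι → ℝ)
    (A B : ι → Finset (Fin n)) (μ : (Fin n → Bool) → ℝ) :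
    ∑ i ∈ s, c i * zeroOneProb μ (A i) (B i) =
      ∑ ρ, (∑ i ∈ s.filter
        (fun i => (∀ j ∈ A i, ρ j = false) ∧ ∀ j ∈ B i, ρ j = true), c i) * μ ρ := by
  simp only [zeroOneProb, sum_filter, mul_sum, sum_mul, mul_ite, ite_mul, mul_zero, zero_mul]
  exact sum_comm

theorem sum_neg_two_pow_mul_zeroOneProb_ones (S : Finset (Fin n)) (μ : (Fin n → Bool) → ℝ) :
    ∑ T ∈ S.powerset, (-2 : ℝ) ^ #T * zeroOneProb μ ∅ T =
      ∑ ρ, (-1) ^ #(S.filter (ρ · = true)) * μ ρ := by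
  rw [sum_mul_zeroOneProb S.powerset _ (fun _ => ∅)]
  refine sum_congr rfl fun ρ _ => ?_
  have hsubsets : S.powerset.filter (fun T => (∀ j ∈ (∅ : Finset (Fin n)), ρ j = false) ∧
      ∀ j ∈ T, ρ j = true) = (S.filter (ρ · = true)).powerset := by
    ext T
    simp only [mem_filter, mem_powerset, subset_iff]
    grind
  rw [hsubsets, sum_powerset_neg_two_pow]

theorem sum_neg_one_pow_mul_zeroOneProb_sdiff (S : Finset (Fin n)) (μ : (Fin n → Bool) → ℝ) :
    ∑ T ∈ S.powerset, (-1 : ℝ) ^ #T * zeroOneProb μ T (S \ T) =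
      ∑ ρ, (-1) ^ #(S.filter (ρ · = false)) * μ ρ := by
  rw [sum_mul_zeroOneProb S.powerset _ (fun T => T) (S \ ·)]
  refine sum_congr rfl fun ρ _ => ?_
  have hzeros : S.powerset.filter (fun T => (∀ j ∈ T, ρ j = false) ∧ ∀ j ∈ S \ T, ρ j = true) =
      {S.filter (ρ · = false)} := by
    ext T
    simp only [mem_filter, mem_powerset, mem_singleton, Finset.ext_iff]
    grind
  rw [hzeros, sum_singleton]

theorem sum_neg_two_pow_mul_zeroOneProb_ones_eq (S : Finset (Fin n))
    (μ : (Fin n → Bool) → ℝ) :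
    ∑ T ∈ S.powerset, (-2 : ℝ) ^ #T * zeroOneProb μ ∅ T =
      (-1) ^ #S * ∑ T ∈ S.powerset, (-1 : ℝ) ^ #T * zeroOneProb μ T (S \ T) := by
  rw [sum_neg_two_pow_mul_zeroOneProb_ones, sum_neg_one_pow_mul_zeroOneProb_sdiff, mul_sum]
  refine sum_congr rfl fun ρ _ => ?_
  have hcard : #S = #(S.filter (ρ · = true)) + #(S.filter (ρ · = false)) := by
    simpa using (card_filter_add_card_filter_not (s := S) (ρ · = true)).symm
  rw [hcard, ← mul_assoc, neg_one_pow_add_mul_neg_one_pow]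

theorem sum_neg_one_pow_mul_zeroOneProb_sdiff_of_swap {S : Finset (Fin n)}
    {μ μ' : (Fin n → Bool) → ℝ}
    (h : ∀ T ⊆ S, zeroOneProb μ T (S \ T) = zeroOneProb μ' (S \ T) T) :
    ∑ T ∈ S.powerset, (-1 : ℝ) ^ #T * zeroOneProb μ T (S \ T) =
      (-1) ^ #S * ∑ T ∈ S.powerset, (-1 : ℝ) ^ #T * zeroOneProb μ' T (S \ T) := by
  rw [mul_sum]
  refine sum_nbij' (S \ ·) (S \ ·) (fun _ _ => mem_powerset.2 sdiff_subset)
    (fun _ _ => mem_powerset.2 sdiff_subset)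
    (fun T hT => Finset.sdiff_sdiff_eq_self (mem_powerset.1 hT))
    (fun T hT => Finset.sdiff_sdiff_eq_self (mem_powerset.1 hT)) fun T hT => ?_
  rw [mem_powerset] at hT
  rw [h T hT, Finset.sdiff_sdiff_eq_self hT, ← card_sdiff_add_card_eq_card hT, add_comm,
    ← mul_assoc, neg_one_pow_add_mul_neg_one_pow]

end zeroOneProb

theorem even_rows_zero_general (n : ℕ) (S : Finset (Fin n)) (hS : Even S.card)
    (ν : ℝ → ((Fin n → Bool) → ℝ))
    (hdiff : ∀ ρ : Fin n → Bool, DifferentiableAt ℝ (fun p => ν p ρ) (1/2))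
    (hsym : ∀ T ⊆ S, ∀ p ∈ Set.Ioo (0:ℝ) 1,
      zeroOneProb (ν p) T (S \ T) = zeroOneProb (ν (1 - p)) (S \ T) T) :
    ∑ T ∈ S.powerset, (-2:ℝ) ^ T.card *
      deriv (fun p => zeroOneProb (ν p) ∅ T) (1/2) = 0 := by
  set G : ℝ → ℝ := fun p => ∑ T ∈ S.powerset, (-2 : ℝ) ^ #T * zeroOneProb (ν p) ∅ T
  have hG_symm : G =ᶠ[𝓝 (1/2)] fun p => G (1 - p) := by
    filter_upwards [Ioo_mem_nhds (by norm_num : (0 : ℝ) < 1/2) (by norm_num : (1/2 : ℝ) < 1)]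
      with p hp
    simp only [G, sum_neg_two_pow_mul_zeroOneProb_ones_eq,
      sum_neg_one_pow_mul_zeroOneProb_sdiff_of_swap fun T hT => hsym T hT p hp, hS.neg_one_pow,
      one_mul]
  have hG_deriv : deriv G (1/2) = ∑ T ∈ S.powerset, (-2 : ℝ) ^ #T *
      deriv (fun p => zeroOneProb (ν p) ∅ T) (1/2) := by
    rw [deriv_fun_sum fun T _ => (differentiableAt_zeroOneProb hdiff ∅ T).const_mul _]
    exact sum_congr rfl fun T _ => deriv_const_mul _ (differentiableAt_zeroOneProb hdiff ∅ T)
  rw [← hG_deriv]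
  exact deriv_eq_zero_of_eventuallyEq_comp_const_sub hG_symm (by norm_num)

/-- if `|S|` is even, each `p ↦ ν_p(ρ)` is differentiable at `1/2`, and
`ν_p(0^T 1^{S∖T}) = ν_{1-p}(0^{S∖T} 1^T)` for all `T ⊆ S` and `p ∈ (0,1)`, then
`Σ_{T ⊆ S} (-2)^{|T|} ν'_{1/2}(1^T) = 0`. -/
theorem even_rows_zero (n : ℕ) (hn : 1 ≤ n) (S : Finset (Fin n)) (hS : Even S.card)
    (ν : ℝ → ((Fin n → Bool) → ℝ))
    (hdiff : ∀ ρ : Fin n → Bool, DifferentiableAt ℝ (fun p => ν p ρ) (1/2))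
    (hsym : ∀ T ⊆ S, ∀ p ∈ Set.Ioo (0:ℝ) 1,
      zeroOneProb (ν p) T (S \ T) = zeroOneProb (ν (1 - p)) (S \ T) T) :
    ∑ T ∈ S.powerset, (-2:ℝ) ^ T.card *
      deriv (fun p => zeroOneProb (ν p) ∅ T) (1/2) = 0 :=
  even_rows_zero_general n S hS ν hdiff hsym
end
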